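/- arXiv:1612.04576 — 2 statements merged into one kernel-verified Lean document; each statement's English description precedes it below -/
import Mathlib

section
/- Let (Ω, 𝔉, P) be a probability space, H : Ω → [0,∞) a measurable, P-integrable random variable, and y > 0. Then lim_{n→∞} ( ∫_Ω e^{−H(ω)/(n·y)} dP(ω) )^n = exp( −(∫_Ω H dP)/y ). -/
open MeasureTheory Filter

/-- Fréchet max-domain of attraction, one-dimensional core: if `H ≥ 0` is
integrable and `y > 0`, then `(E[exp(-H/(n y))])^n → exp(-E[H]/y)` as `n → ∞`. -/
theorem frechet_mda_core {Ω : Type*} [MeasurableSpace Ω]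
    (P : Measure Ω) [IsProbabilityMeasure P]
    (H : Ω → ℝ) (hHmeas : Measurable H) (hH0 : ∀ ω, 0 ≤ H ω)
    (hHint : Integrable H P) (y : ℝ) (hy : 0 < y) :
    Tendsto (fun n : ℕ => (∫ ω, Real.exp (-(H ω / (n * y))) ∂P) ^ n)
      atTop (nhds (Real.exp (-(∫ ω, H ω ∂P) / y))) := by
  set F : ℕ → Ω → ℝ := fun n ω => Real.exp (-(H ω / (n * y))) with hF
  set a : ℕ → ℝ := fun n => ∫ ω, F n ω ∂P with ha
  set L : ℝ := -(∫ ω, H ω ∂P) / y with hLdef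
  have hFmeas : ∀ n, Measurable (F n) := fun n =>
    Real.measurable_exp.comp (hHmeas.div_const _).neg
  have hFpos : ∀ n ω, 0 < F n ω := fun n ω => Real.exp_pos _
  have hFle1 : ∀ n ω, F n ω ≤ 1 := fun n ω => by
    have h1 : 0 ≤ H ω / (n * y) :=
      div_nonneg (hH0 ω) (by positivity)
    exact Real.exp_le_one_iff.2 (by linarith)
  have hFint : ∀ n, Integrable (F n) P := fun n =>
    (integrable_const (1 : ℝ)).mono' (hFmeas n).aestronglyMeasurable
      (ae_of_all _ fun ω => by
        rw [Real.norm_eq_abs, abs_of_pos (hFpos n ω)]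
        simpa using hFle1 n ω)
  have hapos : ∀ n, 0 < a n := by
    intro n
    rw [ha]
    rw [integral_pos_iff_support_of_nonneg (fun ω => (hFpos n ω).le) (hFint n)]
    have : Function.support (F n) = Set.univ :=
      Set.eq_univ_of_forall fun ω => (hFpos n ω).ne'
    rw [this]
    simp
  have hale1 : ∀ n, a n ≤ 1 := by
    intro n
    have := integral_mono (hFint n) (integrable_const (1 : ℝ)) (hFle1 n)
    simpa using this
  -- D n = n * (a n - 1) = ∫ n * (F n ω - 1)
  set D : ℕ → ℝ := fun n => (n : ℝ) * (a n - 1) with hD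
  have hDint : ∀ n, D n = ∫ ω, (n : ℝ) * (F n ω - 1) ∂P := by
    intro n
    rw [integral_const_mul, integral_sub (hFint n) (integrable_const 1)]
    simp [hD, ha]
  -- pointwise limit
  have hptwise : ∀ ω, Tendsto (fun n : ℕ => (n : ℝ) * (F n ω - 1)) atTop
      (nhds (-(H ω / y))) := by
    intro ω
    set x : ℝ := -(H ω / y) with hx
    have hderiv : HasDerivAt (fun t : ℝ => Real.exp (x * t)) x 0 := by
      simpa using ((hasDerivAt_id (0 : ℝ)).const_mul x).exp
    have hslope := hasDerivAt_iff_tendsto_slope.1 hderiv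
    have hinv : Tendsto (fun n : ℕ => (1 : ℝ) / n) atTop (nhdsWithin 0 {(0:ℝ)}ᶜ) := by
      apply tendsto_nhdsWithin_of_tendsto_nhds_of_eventually_within
      · exact tendsto_one_div_atTop_nhds_zero_nat
      · filter_upwards [eventually_gt_atTop 0] with n hn
        simp [(Nat.cast_pos.2 hn).ne']
    have hcomp := hslope.comp hinv
    apply hcomp.congr'
    filter_upwards [eventually_gt_atTop 0] with n hn
    have hn' : (n : ℝ) ≠ 0 := (Nat.cast_pos.2 hn).ne'
    have h1 : x * (1 / (n : ℝ)) = -(H ω / (↑n * y)) := by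
      rw [hx, mul_one_div, neg_div, div_div, mul_comm y (n : ℝ)]
    simp only [Function.comp, slope_def_field]
    rw [h1]
    field_simp [hF]
    simp only [hF, Real.exp_zero]
    ring_nf
    rw [Real.exp_zero]
    ring
  -- dominated convergence
  have hDtends : Tendsto D atTop (nhds L) := by
    have hint : Tendsto (fun n : ℕ => ∫ ω, (n : ℝ) * (F n ω - 1) ∂P) atTop
        (nhds (∫ ω, -(H ω / y) ∂P)) := by
      apply tendsto_integral_of_dominated_convergence (fun ω => H ω / y)
      · intro n
        exact (((hFmeas n).sub measurable_const).const_mul _).aestronglyMeasurable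
      · exact hHint.div_const y
      · intro n
        apply ae_of_all
        intro ω
        have hx0 : 0 ≤ H ω / (↑n * y) := div_nonneg (hH0 ω) (by positivity)
        have hb : 1 - Real.exp (-(H ω / (↑n * y))) ≤ H ω / (↑n * y) := by
          have := Real.add_one_le_exp (-(H ω / (↑n * y)))
          linarith
        rw [Real.norm_eq_abs, abs_mul, Nat.abs_cast, abs_of_nonpos (by linarith [hFle1 n ω] : F n ω - 1 ≤ 0)]
        rcases Nat.eq_zero_or_pos n with rfl | hn
        · simpa using div_nonneg (hH0 ω) hy.le
        · have hn' : (0:ℝ) < n := Nat.cast_pos.2 hn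
          have : (n : ℝ) * (1 - F n ω) ≤ (n : ℝ) * (H ω / (↑n * y)) := by
            apply mul_le_mul_of_nonneg_left _ hn'.le
            simpa [hF] using hb
          calc (n : ℝ) * -(F n ω - 1) = (n:ℝ) * (1 - F n ω) := by ring
            _ ≤ (n : ℝ) * (H ω / (↑n * y)) := this
            _ = H ω / y := by field_simp
      · exact ae_of_all _ hptwise
    have heq : (∫ ω, -(H ω / y) ∂P) = L := by
      rw [integral_neg, integral_div, hLdef, neg_div]
    rw [heq] at hint
    exact hint.congr fun n => (hDint n).symm
  -- a n → 1
  have hato1 : Tendsto a atTop (nhds 1) := by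
    have h0 : Tendsto (fun n : ℕ => D n * (1 / (n : ℝ))) atTop (nhds 0) := by
      simpa using hDtends.mul tendsto_one_div_atTop_nhds_zero_nat
    have h1 : Tendsto (fun n : ℕ => a n - 1) atTop (nhds 0) := by
      apply h0.congr'
      filter_upwards [eventually_gt_atTop 0] with n hn
      have hn' : (n : ℝ) ≠ 0 := (Nat.cast_pos.2 hn).ne'
      rw [hD]
      field_simp
    have := h1.add_const 1
    simpa using this
  -- squeeze for n * log (a n)
  have hlower : Tendsto (fun n : ℕ => D n / a n) atTop (nhds L) := by
    have := hDtends.div hato1 one_ne_zero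
    rw [div_one] at this
    exact this
  have hlog : Tendsto (fun n : ℕ => (n : ℝ) * Real.log (a n)) atTop (nhds L) := by
    apply tendsto_of_tendsto_of_tendsto_of_le_of_le hlower hDtends
    · intro n
      have h1 : 1 - (a n)⁻¹ ≤ Real.log (a n) := Real.one_sub_inv_le_log_of_pos (hapos n)
      have h2 : (a n - 1) / a n = 1 - (a n)⁻¹ := by
        rw [sub_div, div_self (hapos n).ne', one_div]
      have h3 : (a n - 1) / a n ≤ Real.log (a n) := h2.le.trans h1
      calc D n / a n = (n : ℝ) * ((a n - 1) / a n) := by rw [hD]; ring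
        _ ≤ (n : ℝ) * Real.log (a n) :=
          mul_le_mul_of_nonneg_left h3 (Nat.cast_nonneg n)
    · intro n
      have := Real.log_le_sub_one_of_pos (hapos n)
      calc (n : ℝ) * Real.log (a n) ≤ (n : ℝ) * (a n - 1) :=
          mul_le_mul_of_nonneg_left this (Nat.cast_nonneg n)
        _ = D n := rfl
  -- conclude
  have hexp := (Real.continuous_exp.tendsto L).comp hlog
  apply hexp.congr
  intro n
  show Real.exp ((n : ℝ) * Real.log (a n)) = (a n) ^ n
  rw [Real.exp_nat_mul, Real.exp_log (hapos n)]
end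

section
/- Let α > 0 and 0 ≤ ε < r₀. Let B be a set of parameters, and for each β ∈ B let C_β : [ε,r₀] → [0,∞) be measurable; let T̂ : [ε,r₀] → [0,∞) be measurable with ∫_ε^{r₀} T̂(r)^{2α} dr < ∞. Define A(β) = ∫_ε^{r₀} (T̂(r) C_β(r))^α dr and B(β) = ∫_ε^{r₀} C_β(r)^{2α} dr, and assume 0 < B(β) < ∞ and A(β) < ∞ for all β ∈ B. Suppose β̂ ∈ B maximizes β ↦ A(β)²/B(β) over B, and set σ̂² = (A(β̂)/B(β̂))^{1/α}. Then for every σ² ≥ 0 and every β ∈ B, ∫_ε^{r₀} ( (σ̂² C_{β̂}(r))^α − T̂(r)^α )² dr ≤ ∫_ε^{r₀} ( (σ² C_β(r))^α − T̂(r)^α )² dr. -/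
open MeasureTheory

/-- Minimum contrast method: with `A(β) = ∫_ε^{r₀} (T̂(r) C_β(r))^α dr` and
`B(β) = ∫_ε^{r₀} C_β(r)^{2α} dr`, the contrast
`d(T_{σ²,β}, T̂) = ∫_ε^{r₀} ((σ² C_β(r))^α - T̂(r)^α)² dr` is minimized over
`(σ², β)` by `β̂ = argmax_β A(β)²/B(β)` and `σ̂² = (A(β̂)/B(β̂))^{1/α}`. -/
theorem minimum_contrast_method {B : Type*} (α ε r₀ : ℝ)
    (hα : 0 < α) (hε : 0 ≤ ε) (hεr : ε < r₀)
    (C : B → ℝ → ℝ) (hCmeas : ∀ β, Measurable (C β)) (hC0 : ∀ β r, 0 ≤ C β r)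
    (T : ℝ → ℝ) (hTmeas : Measurable T) (hT0 : ∀ r, 0 ≤ T r)
    (hT2 : IntegrableOn (fun r => T r ^ (2 * α)) (Set.Icc ε r₀))
    (A Bf : B → ℝ)
    (hA : ∀ β, A β = ∫ r in Set.Icc ε r₀, (T r * C β r) ^ α)
    (hBf : ∀ β, Bf β = ∫ r in Set.Icc ε r₀, C β r ^ (2 * α))
    (hAint : ∀ β, IntegrableOn (fun r => (T r * C β r) ^ α) (Set.Icc ε r₀))
    (hBint : ∀ β, IntegrableOn (fun r => C β r ^ (2 * α)) (Set.Icc ε r₀))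
    (hBpos : ∀ β, 0 < Bf β)
    (βhat : B) (hβhat : ∀ β, A β ^ 2 / Bf β ≤ A βhat ^ 2 / Bf βhat)
    (σhat2 : ℝ) (hσhat2 : σhat2 = (A βhat / Bf βhat) ^ (1 / α)) :
    ∀ σ2 : ℝ, 0 ≤ σ2 → ∀ β : B,
      (∫ r in Set.Icc ε r₀, ((σhat2 * C βhat r) ^ α - T r ^ α) ^ 2)
        ≤ ∫ r in Set.Icc ε r₀, ((σ2 * C β r) ^ α - T r ^ α) ^ 2 := by
  intro σ2 hσ2 β
  have hApos : ∀ b, 0 ≤ A b := by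
    intro b; rw [hA]
    exact integral_nonneg fun r => Real.rpow_nonneg (mul_nonneg (hT0 r) (hC0 b r)) _
  have key : ∀ (b : B) (s : ℝ), 0 ≤ s →
      (∫ r in Set.Icc ε r₀, ((s * C b r) ^ α - T r ^ α) ^ 2)
        = (s ^ α) ^ 2 * Bf b - 2 * s ^ α * A b
            + ∫ r in Set.Icc ε r₀, T r ^ (2 * α) := by
    intro b s hs
    have hpt : ∀ r, ((s * C b r) ^ α - T r ^ α) ^ 2
        = (s ^ α) ^ 2 * C b r ^ (2 * α) - 2 * s ^ α * (T r * C b r) ^ α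
            + T r ^ (2 * α) := by
      intro r
      have hc := hC0 b r
      have ht := hT0 r
      have h2 : (2 : ℝ) * α = α * 2 := by ring
      rw [Real.mul_rpow hs hc, Real.mul_rpow ht hc, h2,
        Real.rpow_mul hc, Real.rpow_mul ht, Real.rpow_two, Real.rpow_two]
      ring
    simp_rw [hpt]
    have hi1 : IntegrableOn (fun r => (s ^ α) ^ 2 * C b r ^ (2 * α)) (Set.Icc ε r₀) :=
      (hBint b).const_mul _
    have hi2 : IntegrableOn (fun r => 2 * s ^ α * (T r * C b r) ^ α) (Set.Icc ε r₀) :=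
      (hAint b).const_mul _
    have hi12 : IntegrableOn (fun r => (s ^ α) ^ 2 * C b r ^ (2 * α)
        - 2 * s ^ α * (T r * C b r) ^ α) (Set.Icc ε r₀) := hi1.sub hi2
    rw [integral_add hi12 hT2, integral_sub hi1 hi2,
      integral_const_mul, integral_const_mul, ← hA b, ← hBf b]
  have hABnn : 0 ≤ A βhat / Bf βhat := div_nonneg (hApos _) (hBpos _).le
  have hσnn : 0 ≤ σhat2 := hσhat2 ▸ Real.rpow_nonneg hABnn _
  have hσα : σhat2 ^ α = A βhat / Bf βhat := by
    rw [hσhat2, ← Real.rpow_mul hABnn, one_div, inv_mul_cancel₀ hα.ne',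
      Real.rpow_one]
  rw [key βhat σhat2 hσnn, key β σ2 hσ2, hσα]
  have hu : 0 ≤ σ2 ^ α := Real.rpow_nonneg hσ2 _
  have h1 : A β ^ 2 / Bf β * Bf β = A β ^ 2 := div_mul_cancel₀ _ (hBpos β).ne'
  have h2 : A βhat ^ 2 / Bf βhat * Bf βhat = A βhat ^ 2 :=
    div_mul_cancel₀ _ (hBpos βhat).ne'
  have hmax := hβhat β
  have hb := hBpos β
  have hbh := hBpos βhat
  have hsq := sq_nonneg (σ2 ^ α * Bf β - A β)
  have hd : (A βhat / Bf βhat) ^ 2 * Bf βhat - 2 * (A βhat / Bf βhat) * A βhat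
      = - (A βhat ^ 2 / Bf βhat) := by
    field_simp; ring
  rw [hd]
  nlinarith [mul_le_mul_of_nonneg_right hmax hb.le]
end
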